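/- For every c ≥ 2 and every permutation π of {1,...,c}: if a is the least k such that I_π^k contains the increasing sequence I_c as a subsequence, and b is the least k such that I_π^k contains the decreasing sequence D_c as a subsequence, then a + b = c + 1. -/

import Mathlib

/-!
For a list `p` without repetitions, a word `u` over the letters of `p` embeds into `p^k` exactly
when `k` is at least the number of maximal runs of `u` that ascend in the order of `p`: each
copy of `p` can absorb one ascending run, and greedily this suffices. Consecutive letters of
`I_c` are distinct, so each of the `c - 1` adjacent pairs of `I_c` ascends in exactly one of
`I_c` and `D_c = reverse I_c`; hence the run counts of the two add up to `2 + (c - 1) = c + 1`.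
-/

/-- The increasing sequence `1 2 ... c`. -/
def Ic (c : ℕ) : List ℕ := List.range' 1 c

/-- The decreasing sequence `c (c-1) ... 1`. -/
def Dc (c : ℕ) : List ℕ := (Ic c).reverse

/-- `k` concatenated copies of the list `l`. -/
def rep (l : List ℕ) (k : ℕ) : List ℕ := (List.replicate k l).flatten

/-- `up(c,t)`: the sequence `1 2 ... c` repeated `t` times. -/
def upSeq (c t : ℕ) : List ℕ := rep (Ic c) t

/-- `alt(c,k)`: the concatenation of `k` permutations alternating `I_c, D_c, I_c, ...`. -/
def altSeq (c k : ℕ) : List ℕ :=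
  ((List.range k).map (fun i => if i % 2 = 0 then Ic c else Dc c)).flatten

/-- A sequence `s` contains `u` if some subsequence of `s` is obtained from `u`
by an injective renaming of its letters. -/
def Contains (s u : List ℕ) : Prop :=
  ∃ f : ℕ → ℕ, Function.Injective f ∧ (u.map f).Sublist s

/-- `F` is an `(r,s)`-formation: a concatenation of `s` permutations of a set of
`r` distinct letters. -/
def IsFormation (r s : ℕ) (F : List ℕ) : Prop :=
  ∃ (A : Finset ℕ) (ps : List (List ℕ)), A.card = r ∧ ps.length = s ∧
    (∀ p ∈ ps, p.Nodup ∧ p.toFinset = A) ∧ F = ps.flatten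

/-- `F` is a binary `(r,s)`-formation: an `(r,s)`-formation in which every
constituent permutation equals a fixed permutation `p` or its reverse. -/
def IsBinaryFormation (r s : ℕ) (F : List ℕ) : Prop :=
  ∃ (A : Finset ℕ) (p : List ℕ) (ps : List (List ℕ)), A.card = r ∧
    p.Nodup ∧ p.toFinset = A ∧ ps.length = s ∧
    (∀ q ∈ ps, q = p ∨ q = p.reverse) ∧ F = ps.flatten

/-- The formation width of `u`: the minimum `s` such that there exists `r` for which
every `(r,s)`-formation contains `u`. -/
noncomputable def fw (u : List ℕ) : ℕ :=
  sInf {s | ∃ r, ∀ F, IsFormation r s F → Contains F u}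

/-- The formation length of `u`: the minimum `r` such that every `(r, fw u)`-formation
contains `u`. -/
noncomputable def fl (u : List ℕ) : ℕ :=
  sInf {r | ∀ F, IsFormation r (fw u) F → Contains F u}

/-- For a permutation `π` of `{1,...,c}`, the sequence `I_π = π(1) π(2) ... π(c)`. -/
def Iperm {c : ℕ} (π : Equiv.Perm (Fin c)) : List ℕ :=
  List.ofFn (fun i => (π i).val + 1)

/-- `l(u)` for a sequence `u` on letters `1,...,c`: the smallest `k` such that
`up(c,k)` contains `u`. -/
noncomputable def lval (c : ℕ) (u : List ℕ) : ℕ := sInf {k | Contains (upSeq c k) u}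

/-- `r(u)` for a sequence `u` on letters `1,...,c`: the smallest `k` such that
`alt(c,k)` contains `u`. -/
noncomputable def rval (c : ℕ) (u : List ℕ) : ℕ := sInf {k | Contains (altSeq c k) u}

/-- The binary formation `I_c^{e_1} D_c^{e_2} I_c^{e_3} ...` determined by the list
of exponents `e` (blocks alternate starting with `I_c`). -/
def altBlocks (c : ℕ) (e : List ℕ) : List ℕ :=
  (e.zipIdx.map (fun p => rep (if p.2 % 2 = 0 then Ic c else Dc c) p.1)).flatten

section Runs

variable {α : Type*} (r : α → α → Prop) [DecidableRel r]

def numRuns : List α → ℕ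
  | [] => 0
  | [_] => 1
  | a :: b :: l => numRuns (b :: l) + if r a b then 0 else 1

theorem numRuns_cons_cons (a b : α) (l : List α) :
    numRuns r (a :: b :: l) = numRuns r (b :: l) + if r a b then 0 else 1 := rfl

theorem numRuns_cons_pos : ∀ (a : α) (l : List α), 0 < numRuns r (a :: l)
  | _, [] => Nat.one_pos
  | _, b :: l => (numRuns_cons_pos b l).trans_le (Nat.le_add_right _ _)

theorem numRuns_le_one_of_isChain : ∀ {l : List α}, l.IsChain r → numRuns r l ≤ 1
  | [], _ => zero_le_one
  | [_], _ => le_rfl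
  | a :: b :: l, h => by
    rw [List.isChain_cons_cons] at h
    simpa [numRuns_cons_cons, h.1] using numRuns_le_one_of_isChain h.2

theorem numRuns_append_le :
    ∀ l₁ l₂ : List α, numRuns r (l₁ ++ l₂) ≤ numRuns r l₁ + numRuns r l₂
  | [], _ => by simp [numRuns]
  | [_], [] => le_rfl
  | [a], b :: l => by
    rw [List.singleton_append, numRuns_cons_cons]
    split <;> simp [numRuns]
  | a :: b :: l₁, l₂ => by
    have := numRuns_append_le (b :: l₁) l₂
    simp only [List.cons_append, numRuns_cons_cons] at *
    omega

theorem numRuns_append_pair : ∀ (l : List α) (a b : α),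
    numRuns r (l ++ [a, b]) = numRuns r (l ++ [a]) + if r a b then 0 else 1
  | [], _, _ => rfl
  | [_], _, _ => by simp only [List.cons_append, List.nil_append, numRuns_cons_cons, numRuns]; omega
  | x :: y :: l, a, b => by
    simp only [List.cons_append, numRuns_cons_cons] at *
    have := numRuns_append_pair (y :: l) a b
    simp only [List.cons_append] at this
    omega

theorem numRuns_reverse : ∀ l : List α, numRuns r l.reverse = numRuns (fun a b => r b a) l
  | [] => rfl
  | [_] => rfl
  | a :: b :: l => by
    have h : (a :: b :: l).reverse = l.reverse ++ [b, a] := by simp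
    rw [h, numRuns_append_pair, ← List.reverse_cons, numRuns_reverse, numRuns_cons_cons]

theorem numRuns_add_numRuns_reverse {β : Type*} [LinearOrder β] (f : α → β) :
    ∀ {l : List α}, l ≠ [] → l.IsChain (fun a b => f a ≠ f b) →
      numRuns (fun a b => f a < f b) l + numRuns (fun a b => f a < f b) l.reverse =
        l.length + 1
  | [], h, _ => absurd rfl h
  | [_], _, _ => rfl
  | a :: b :: l, _, h => by
    rw [List.isChain_cons_cons] at h
    have ih := numRuns_add_numRuns_reverse f (List.cons_ne_nil b l) h.2
    rw [numRuns_reverse] at ih ⊢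
    simp only [numRuns_cons_cons, List.length_cons] at ih ⊢
    rcases lt_or_gt_of_ne h.1 with hab | hab <;>
      simp only [hab, hab.not_gt, if_true, if_false] <;> omega

end Runs

section Sublist

variable {p : List ℕ}

theorem rep_succ (l : List ℕ) (k : ℕ) : rep l (k + 1) = l ++ rep l k := by
  simp [rep, List.replicate_succ]

theorem drop_idxOf_eq_cons {a : ℕ} (ha : a ∈ p) :
    p.drop (p.idxOf a) = a :: p.drop (p.idxOf a + 1) := by
  have hlt := List.idxOf_lt_length_of_mem ha
  rw [List.drop_eq_getElem_cons hlt, List.getElem_idxOf hlt]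

theorem isChain_idxOf_lt_of_sublist (hp : p.Nodup) {u : List ℕ} (h : u.Sublist p) :
    u.IsChain (fun a b => p.idxOf a < p.idxOf b) := by
  refine (List.Pairwise.sublist h ?_).isChain
  rw [List.pairwise_iff_getElem]
  intro i j hi hj hij
  rwa [hp.idxOf_getElem i hi, hp.idxOf_getElem j hj]

theorem numRuns_le_of_sublist_rep (hp : p.Nodup) :
    ∀ {k : ℕ} {u : List ℕ}, u.Sublist (rep p k) →
      numRuns (fun a b => p.idxOf a < p.idxOf b) u ≤ k
  | 0, u, h => by
    rw [show rep p 0 = [] from rfl, List.sublist_nil] at h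
    simp [h, numRuns]
  | k + 1, _, h => by
    rw [rep_succ, List.sublist_append_iff] at h
    obtain ⟨u₁, u₂, rfl, h₁, h₂⟩ := h
    have := numRuns_le_one_of_isChain _ (isChain_idxOf_lt_of_sublist hp h₁)
    have := numRuns_le_of_sublist_rep hp h₂
    have := numRuns_append_le (fun a b => p.idxOf a < p.idxOf b) u₁ u₂
    omega

-- Greedy embedding: an ascent stays in the current copy of `p`, a descent moves on to the next.
theorem cons_sublist_drop_idxOf_append_rep :
    ∀ {a : ℕ} {t : List ℕ} {k : ℕ}, (∀ x ∈ a :: t, x ∈ p) →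
      numRuns (fun a b => p.idxOf a < p.idxOf b) (a :: t) ≤ k + 1 →
      (a :: t).Sublist (p.drop (p.idxOf a) ++ rep p k)
  | a, [], _, hu, _ => by
    rw [drop_idxOf_eq_cons (hu a List.mem_cons_self)]
    exact (List.singleton_sublist.2 List.mem_cons_self).trans (List.sublist_append_left _ _)
  | a, b :: t, k, hu, hk => by
    have hb : ∀ x ∈ b :: t, x ∈ p := fun x hx => hu x (List.mem_cons_of_mem a hx)
    rw [drop_idxOf_eq_cons (hu a List.mem_cons_self), List.cons_append]
    rw [numRuns_cons_cons] at hk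
    by_cases hab : p.idxOf a < p.idxOf b
    · rw [if_pos hab] at hk
      refine (cons_sublist_drop_idxOf_append_rep hb hk).cons_cons a |>.trans ?_
      exact ((List.drop_sublist_drop_left p hab).append_right _).cons_cons a
    · rw [if_neg hab] at hk
      have := numRuns_cons_pos (fun a b => p.idxOf a < p.idxOf b) b t
      obtain ⟨k, rfl⟩ : ∃ k', k = k' + 1 := ⟨k - 1, by omega⟩
      have := cons_sublist_drop_idxOf_append_rep hb (k := k) (by omega)
      rw [rep_succ]
      refine List.Sublist.cons_cons a (List.Sublist.trans this ?_)
      exact ((List.drop_sublist _ p).append_right _).trans (List.sublist_append_right _ _)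

theorem sublist_rep_iff (hp : p.Nodup) {u : List ℕ} (hu : ∀ x ∈ u, x ∈ p) {k : ℕ} :
    u.Sublist (rep p k) ↔ numRuns (fun a b => p.idxOf a < p.idxOf b) u ≤ k := by
  refine ⟨numRuns_le_of_sublist_rep hp, fun hk => ?_⟩
  rcases u with _ | ⟨a, t⟩
  · exact List.nil_sublist _
  have := numRuns_cons_pos (fun a b => p.idxOf a < p.idxOf b) a t
  obtain ⟨k, rfl⟩ : ∃ k', k = k' + 1 := ⟨k - 1, by omega⟩
  rw [rep_succ]
  exact (cons_sublist_drop_idxOf_append_rep hu hk).trans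
    ((List.drop_sublist _ p).append_right _)

theorem sInf_sublist_rep (hp : p.Nodup) {u : List ℕ} (hu : ∀ x ∈ u, x ∈ p) :
    sInf {k | u.Sublist (rep p k)} = numRuns (fun a b => p.idxOf a < p.idxOf b) u := by
  simp_rw [sublist_rep_iff hp hu]
  exact csInf_Ici

end Sublist

theorem nodup_Iperm {c : ℕ} (π : Equiv.Perm (Fin c)) : (Iperm π).Nodup :=
  List.nodup_ofFn.2 fun _ _ h => π.injective (Fin.val_injective (Nat.succ_injective h))

theorem mem_Iperm_of_mem_Ic {c : ℕ} (π : Equiv.Perm (Fin c)) {x : ℕ} (hx : x ∈ Ic c) :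
    x ∈ Iperm π := by
  obtain ⟨i, hi, rfl⟩ := List.mem_range'.1 hx
  exact List.mem_ofFn.2 ⟨π.symm ⟨i, hi⟩, by simp [Nat.add_comm]⟩

theorem stmt10 (c : ℕ) (hc : 2 ≤ c) (π : Equiv.Perm (Fin c)) :
    sInf {k | (Ic c).Sublist (rep (Iperm π) k)} +
      sInf {k | (Dc c).Sublist (rep (Iperm π) k)} = c + 1 := by
  have hp := nodup_Iperm π
  have hI : ∀ x ∈ Ic c, x ∈ Iperm π := fun x => mem_Iperm_of_mem_Ic π
  have hD : ∀ x ∈ Dc c, x ∈ Iperm π := fun x hx => hI x (List.mem_reverse.1 hx)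
  have hne : Ic c ≠ [] := by simp only [Ic, ne_eq, List.range'_eq_nil_iff]; omega
  have hchain : (Ic c).IsChain (fun a b => (Iperm π).idxOf a ≠ (Iperm π).idxOf b) :=
    ((List.nodup_range' (s := 1) (n := c)).imp_of_mem fun ha hb hab h =>
      hab ((List.idxOf_inj (hI _ ha)).1 h)).isChain
  rw [sInf_sublist_rep hp hI, sInf_sublist_rep hp hD, Dc,
    numRuns_add_numRuns_reverse _ hne hchain, Ic, List.length_range']
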